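/- arXiv:1204.4176 — 7 statements merged into one kernel-verified Lean document; each statement's English description precedes it below -/
import Mathlib

section
/- The graph of the function f(x₁, x₂) = x₁ · x₂ is not a semilinear subset of ℕ³. -/
/-- A set in an additive commutative monoid is *linear* if it is of the form
`{b + n₁•u₁ + ⋯ + n_p•u_p | nᵢ ∈ ℕ}`. -/
def IsLinear {M : Type*} [AddCommMonoid M] (A : Set M) : Prop :=
  ∃ (b : M) (p : ℕ) (u : Fin p → M),
    A = {v | ∃ n : Fin p → ℕ, v = b + ∑ i, n i • u i}

/-- A set is *semilinear* if it is a finite union of linear sets. -/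
def IsSemilinear {M : Type*} [AddCommMonoid M] (A : Set M) : Prop :=
  ∃ (t : ℕ) (L : Fin t → Set M), (∀ i, IsLinear (L i)) ∧ A = ⋃ i, L i

lemma key {L : Set (Fin 3 → ℕ)} (hL : IsLinear L)
    (hsub : L ⊆ {v : Fin 3 → ℕ | v 2 = v 0 * v 1})
    {n m : ℕ} (hn : (![n, n, n*n] : Fin 3 → ℕ) ∈ L)
    (hm : (![m, m, m*m] : Fin 3 → ℕ) ∈ L) : n = m := by
  obtain ⟨b, p, u, rfl⟩ := hL
  -- pumping: adding k • u j stays in the set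
  have mem : ∀ v : Fin 3 → ℕ, (∃ c : Fin p → ℕ, v = b + ∑ i, c i • u i) →
      ∀ (j : Fin p) (k : ℕ), (v + k • u j) ∈
        {v : Fin 3 → ℕ | ∃ c : Fin p → ℕ, v = b + ∑ i, c i • u i} := by
    rintro v ⟨c, rfl⟩ j k
    refine ⟨fun i => c i + if i = j then k else 0, ?_⟩
    have : ∑ i, (c i + if i = j then k else 0) • u i
        = (∑ i, c i • u i) + k • u j := by
      rw [Finset.sum_congr rfl (fun i _ => add_smul (c i) _ (u i)),
        Finset.sum_add_distrib]
      congr 1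
      simp [ite_smul]
    rw [this, add_assoc]
  have pump : ∀ (x : ℕ), (![x, x, x*x] : Fin 3 → ℕ) ∈
      {v : Fin 3 → ℕ | ∃ c : Fin p → ℕ, v = b + ∑ i, c i • u i} →
      ∀ j : Fin p, u j 2 = x * (u j 0 + u j 1) := by
    intro x hx j
    have hj : ∀ k : ℕ, (x + k * u j 0) * (x + k * u j 1) = x*x + k * u j 2 := by
      intro k
      have h1 := hsub (mem _ hx j k)
      simp only [Set.mem_setOf_eq, Pi.add_apply, Pi.smul_apply, smul_eq_mul] at h1
      simpa using h1.symm
    have e1 := hj 1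
    have e2 := hj 2
    have h0 : u j 0 * u j 1 = 0 := by nlinarith [e1, e2]
    nlinarith [e1, h0]
  have hn2 := pump n hn
  have hm2 := pump m hm
  by_cases hc : ∀ j : Fin p, u j 0 + u j 1 = 0
  · have hu : ∀ j : Fin p, u j = 0 := by
      intro j
      have h0 : u j 0 = 0 ∧ u j 1 = 0 := by have := hc j; omega
      have h2 : u j 2 = 0 := by rw [hn2 j, hc j, mul_zero]
      funext i
      fin_cases i
      · exact h0.1
      · exact h0.2
      · exact h2
    obtain ⟨c, hcn⟩ := hn
    obtain ⟨d, hdm⟩ := hm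
    simp only [hu, smul_zero, Finset.sum_const_zero, add_zero] at hcn hdm
    have : (![n, n, n*n] : Fin 3 → ℕ) 0 = (![m, m, m*m] : Fin 3 → ℕ) 0 := by
      rw [hcn, hdm]
    simpa using this
  · push_neg at hc
    obtain ⟨j, hj⟩ := hc
    have : n * (u j 0 + u j 1) = m * (u j 0 + u j 1) := by rw [← hn2 j, ← hm2 j]
    exact Nat.eq_of_mul_eq_mul_right (Nat.pos_of_ne_zero hj) this

theorem mul_graph_not_semilinear :
    ¬ IsSemilinear {v : Fin 3 → ℕ | v 2 = v 0 * v 1} := by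
  rintro ⟨t, L, hlin, hU⟩
  have hmem : ∀ x : Fin (t+1), ∃ i : Fin t, (![(x:ℕ), x, x*x] : Fin 3 → ℕ) ∈ L i := by
    intro x
    have hx : (![(x:ℕ), x, x*x] : Fin 3 → ℕ) ∈ {v : Fin 3 → ℕ | v 2 = v 0 * v 1} := by
      simp
    rw [hU] at hx
    simpa using hx
  choose g hg using hmem
  obtain ⟨a, b, hab, hfab⟩ := Fintype.exists_ne_map_eq_of_card_lt g (by simp)
  have hsub : L (g a) ⊆ {v : Fin 3 → ℕ | v 2 = v 0 * v 1} := by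
    rw [hU]; exact Set.subset_iUnion L (g a)
  have := key (hlin (g a)) hsub (hg a) (hfab ▸ hg b)
  exact hab (Fin.val_injective this)
end

section
/- The graph of the function f(x) = 2^x is not a semilinear subset of ℕ². -/
/-!
An infinite semilinear set contains a ray `b + ℕ • u` with `u ≠ 0`: one of its finitely many
linear pieces is infinite, and hence has a nonzero period. Along a ray the second coordinate is
affine in the step count, while on the graph of `2 ^ x` it would have to grow exponentially
unless the ray is constant.
-/

section

variable {M : Type*} [AddCommMonoid M] {A : Set M}

theorem IsLinear.exists_ray_of_infinite (hA : IsLinear A) (hinf : A.Infinite) :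
    ∃ b u : M, u ≠ 0 ∧ ∀ m : ℕ, b + m • u ∈ A := by
  obtain ⟨b, p, u, rfl⟩ := hA
  obtain ⟨j, hj⟩ : ∃ j, u j ≠ 0 := by
    by_contra! hu
    refine hinf ((Set.finite_singleton b).subset ?_)
    rintro v ⟨n, rfl⟩
    simp [hu]
  refine ⟨b, u j, hj, fun m => ⟨Pi.single j m, ?_⟩⟩
  rw [Fintype.sum_eq_single j fun i hi => by simp [hi]]
  simp

theorem IsSemilinear.exists_ray_of_infinite (hA : IsSemilinear A) (hinf : A.Infinite) :
    ∃ b u : M, u ≠ 0 ∧ ∀ m : ℕ, b + m • u ∈ A := by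
  obtain ⟨t, L, hL, rfl⟩ := hA
  obtain ⟨i, hi⟩ : ∃ i, (L i).Infinite := by
    by_contra! hfin
    exact hinf (Set.finite_iUnion hfin)
  obtain ⟨b, u, hu, hray⟩ := (hL i).exists_ray_of_infinite hi
  exact ⟨b, u, hu, fun m => Set.mem_iUnion_of_mem i (hray m)⟩

end

theorem eq_zero_of_add_mul_eq_two_pow_add_mul {a c d e : ℕ}
    (h : ∀ m : ℕ, a + m * c = 2 ^ (d + m * e)) : e = 0 ∧ c = 0 := by
  have he : e = 0 := by
    by_contra he
    -- consecutive terms differ by `c` on the left and by at least `2 ^ m` on the right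
    have hc : ∀ m : ℕ, 2 ^ m ≤ c := fun m => by
      have hstep : 2 ^ (d + m * e) + c = 2 ^ (d + m * e) * 2 ^ e := by
        rw [← pow_add, ← h m, show d + m * e + e = d + (m + 1) * e by ring, ← h (m + 1)]
        ring
      have : 2 ^ m ≤ 2 ^ (d + m * e) :=
        Nat.pow_le_pow_right two_pos (by nlinarith [Nat.pos_of_ne_zero he])
      have : 2 ≤ 2 ^ e := Nat.le_self_pow he 2
      nlinarith
    exact Nat.lt_two_pow_self.not_ge (hc c)
  refine ⟨he, ?_⟩
  have h0 := h 0
  have h1 := h 1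
  simp only [he, mul_zero, zero_mul, add_zero, one_mul] at h0 h1
  omega

theorem eq_zero_of_forall_add_nsmul_mem_graph_two_pow {b u : Fin 2 → ℕ}
    (h : ∀ m : ℕ, b + m • u ∈ {v : Fin 2 → ℕ | v 1 = 2 ^ (v 0)}) : u = 0 := by
  obtain ⟨h0, h1⟩ := eq_zero_of_add_mul_eq_two_pow_add_mul (a := b 1) (c := u 1) (d := b 0)
    (e := u 0) fun m => by simpa using h m
  ext i
  fin_cases i <;> simp [h0, h1]

theorem graph_fin_two_infinite (f : ℕ → ℕ) : {v : Fin 2 → ℕ | v 1 = f (v 0)}.Infinite :=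
  Set.infinite_of_injective_forall_mem (f := fun x => ![x, f x])
    (fun x y hxy => by simpa using congrFun hxy 0) (fun x => by simp)

theorem exp_graph_not_semilinear :
    ¬ IsSemilinear {v : Fin 2 → ℕ | v 1 = 2 ^ (v 0)} := by
  intro hS
  obtain ⟨b, u, hu, hray⟩ := hS.exists_ray_of_infinite (graph_fin_two_infinite (2 ^ ·))
  exact hu (eq_zero_of_forall_add_nsmul_mem_graph_two_pow hray)
end

section
/- If F ⊆ ℕ^k × ℕ^l is semilinear, then the set F̂ = {(x, y_P, y_C) ∈ ℕ^k × ℕ^l × ℕ^l | y_P ≥ y_C componentwise and (x, y_P − y_C) ∈ F} is semilinear. -/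
lemma key_single {l : ℕ} (c : Fin l → ℕ) (j : Fin l) :
    ∑ j', c j' • (Pi.single j' 1 : Fin l → ℕ) j = c j := by
  simp [Pi.single_apply]

lemma linear_hat {k l : ℕ} (A : Set ((Fin k → ℕ) × (Fin l → ℕ))) (hA : IsLinear A) :
    IsLinear {t : (Fin k → ℕ) × (Fin l → ℕ) × (Fin l → ℕ) |
      (∀ j, t.2.2 j ≤ t.2.1 j) ∧ (t.1, t.2.1 - t.2.2) ∈ A} := by
  obtain ⟨b, p, u, rfl⟩ := hA
  refine ⟨(b.1, b.2, 0), p + l,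
    Fin.addCases (fun i => ((u i).1, (u i).2, 0))
      (fun j => (0, Pi.single j 1, Pi.single j 1)), ?_⟩
  ext ⟨x, yP, yC⟩
  simp only [Set.mem_setOf_eq]
  constructor
  · rintro ⟨hle, n, hn⟩
    have hx := congrArg Prod.fst hn
    have hd := congrArg Prod.snd hn
    simp only [Prod.fst_add, Prod.snd_add, Prod.fst_sum, Prod.snd_sum,
      Prod.smul_fst, Prod.smul_snd] at hx hd
    refine ⟨Fin.addCases n yC, ?_⟩
    rw [Fin.sum_univ_add]
    simp only [Fin.addCases_left, Fin.addCases_right]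
    rw [Prod.ext_iff, Prod.ext_iff]
    refine ⟨?_, ?_, ?_⟩
    · simp only [Prod.fst_add, Prod.fst_sum, Prod.smul_fst, smul_zero,
        Finset.sum_const_zero, add_zero]
      exact hx
    · simp only [Prod.snd_add, Prod.fst_add, Prod.snd_sum, Prod.fst_sum,
        Prod.smul_snd, Prod.smul_fst]
      funext j
      have hd' := congrFun hd j
      simp only [Pi.sub_apply, Pi.add_apply, Finset.sum_apply, Pi.smul_apply] at hd'
      have hle' := hle j
      simp only [Pi.add_apply, Finset.sum_apply, Pi.smul_apply]
      rw [key_single yC j]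
      omega
    · simp only [Prod.snd_add, Prod.snd_sum, Prod.smul_snd, Prod.smul_fst]
      funext j
      simp only [Pi.add_apply, Pi.zero_apply, Finset.sum_apply, Pi.smul_apply,
        smul_zero, Finset.sum_const_zero, zero_add]
      exact (key_single yC j).symm
  · rintro ⟨n, hn⟩
    rw [Fin.sum_univ_add] at hn
    simp only [Fin.addCases_left, Fin.addCases_right] at hn
    have hx := congrArg Prod.fst hn
    have hyP := congrArg (fun z => z.2.1) hn
    have hyC := congrArg (fun z => z.2.2) hn
    simp only [Prod.fst_add, Prod.snd_add, Prod.fst_sum, Prod.snd_sum,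
      Prod.smul_fst, Prod.smul_snd, smul_zero, Finset.sum_const_zero,
      add_zero, zero_add] at hx hyP hyC
    have hyP' : ∀ j, yP j = b.2 j + (∑ i, n (Fin.castAdd l i) • (u i).2 j)
        + n (Fin.natAdd p j) := by
      intro j
      have := congrFun hyP j
      simp only [Pi.add_apply, Finset.sum_apply, Pi.smul_apply] at this
      rw [key_single (fun j => n (Fin.natAdd p j)) j] at this
      omega
    have hyC' : ∀ j, yC j = n (Fin.natAdd p j) := by
      intro j
      have := congrFun hyC j
      simp only [Finset.sum_apply, Pi.smul_apply] at this
      rw [key_single (fun j => n (Fin.natAdd p j)) j] at this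
      exact this
    refine ⟨fun j => ?_, fun i => n (Fin.castAdd l i), ?_⟩
    · have := hyP' j; have := hyC' j; omega
    · rw [Prod.ext_iff]
      constructor
      · simp only [Prod.fst_add, Prod.fst_sum, Prod.smul_fst]
        exact hx
      · simp only [Prod.snd_add, Prod.snd_sum, Prod.smul_snd]
        funext j
        simp only [Pi.sub_apply, Pi.add_apply, Finset.sum_apply, Pi.smul_apply]
        have h1 := hyP' j
        have h2 := hyC' j
        omega

theorem semilinear_difference {k l : ℕ}
    (F : Set ((Fin k → ℕ) × (Fin l → ℕ))) (hF : IsSemilinear F) :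
    IsSemilinear {t : (Fin k → ℕ) × (Fin l → ℕ) × (Fin l → ℕ) |
      (∀ j, t.2.2 j ≤ t.2.1 j) ∧ (t.1, t.2.1 - t.2.2) ∈ F} := by
  obtain ⟨t, L, hL, rfl⟩ := hF
  refine ⟨t, fun i => {s : (Fin k → ℕ) × (Fin l → ℕ) × (Fin l → ℕ) |
      (∀ j, s.2.2 j ≤ s.2.1 j) ∧ (s.1, s.2.1 - s.2.2) ∈ L i},
    fun i => linear_hat _ (hL i), ?_⟩
  ext s
  simp only [Set.mem_setOf_eq, Set.mem_iUnion]
  tauto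
end

section
/- Let L ⊆ ℕ^(k+1) be a linear set generated by offset b and vectors u₁, …, u_p, and suppose L is the graph of a partial function (i.e., no two distinct elements of L agree on their first k coordinates). Then the vector j = (0, …, 0, 1) (1 in the last coordinate) is not in the real-vector subspace of ℝ^(k+1) spanned by u₁, …, u_p. -/
theorem last_unit_not_in_span_of_graph {k p : ℕ}
    (b : Fin (k + 1) → ℕ) (u : Fin p → Fin (k + 1) → ℕ)
    (L : Set (Fin (k + 1) → ℕ))
    (hL : L = {v | ∃ n : Fin p → ℕ, v = b + ∑ i, n i • u i})
    (hfun : ∀ v ∈ L, ∀ w ∈ L, (∀ i : Fin k, v i.castSucc = w i.castSucc) → v = w) :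
    (fun i : Fin (k + 1) => if i = Fin.last k then (1 : ℝ) else 0) ∉
      Submodule.span ℝ (Set.range fun i : Fin p => fun j => ((u i j : ℕ) : ℝ)) := by
  intro hmem
  rw [Submodule.mem_span_range_iff_exists_fun] at hmem
  obtain ⟨c, hc⟩ := hmem
  by_cases hQ : ∃ q : Fin p → ℚ, ∑ i, q i • (fun j => ((u i j : ℚ))) =
      (fun i : Fin (k + 1) => if i = Fin.last k then (1 : ℚ) else 0)
  · -- rational solution: clear denominators and contradict `hfun`
    obtain ⟨q, hq⟩ := hQ
    set N : ℕ := ∏ i, (q i).den with hN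
    have hNpos : 0 < N := Finset.prod_pos (fun i _ => (q i).pos)
    set a : Fin p → ℤ := fun i => (q i).num * ((N / (q i).den : ℕ) : ℤ) with ha
    have haq : ∀ i, ((a i : ℤ) : ℚ) = q i * N := by
      intro i
      have h : (q i).den ∣ N := Finset.dvd_prod_of_mem _ (Finset.mem_univ i)
      have hd : ((q i).den : ℚ) ≠ 0 := by exact_mod_cast (q i).den_nz
      have h2 : (N : ℚ) = (N / (q i).den : ℕ) * (q i).den := by
        exact_mod_cast (Nat.div_mul_cancel h).symm
      have h3 : q i * ((q i).den : ℚ) = (q i).num := by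
        rw [mul_comm]; exact_mod_cast Rat.den_mul_eq_num (q i)
      rw [ha, h2,
        show q i * ((N / (q i).den : ℕ) * ((q i).den : ℚ)) =
          q i * (q i).den * (N / (q i).den : ℕ) by ring, h3]
      rw [Int.cast_mul, Int.cast_natCast]
    have hqr : ∀ r : Fin (k + 1), ∑ i, q i * (u i r : ℚ) =
        (if r = Fin.last k then (1 : ℚ) else 0) := by
      intro r
      have := congrFun hq r
      simpa [Finset.sum_apply, smul_eq_mul] using this
    have keyQ : ∀ r : Fin (k + 1), ∑ i, ((a i : ℚ)) * (u i r : ℚ) =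
        (N : ℚ) * (if r = Fin.last k then (1 : ℚ) else 0) := by
      intro r
      rw [← hqr r, Finset.mul_sum]
      refine Finset.sum_congr rfl fun i _ => ?_
      rw [haq i]; ring
    -- split positive/negative parts
    set n : Fin p → ℕ := fun i => (a i).toNat with hn
    set m : Fin p → ℕ := fun i => (-(a i)).toNat with hm
    have han : ∀ i, (n i : ℤ) - (m i : ℤ) = a i := by
      intro i; simp only [hn, hm]; omega
    have hsub : ∀ r : Fin (k + 1),
        (∑ i, (n i : ℤ) * (u i r : ℤ)) - (∑ i, (m i : ℤ) * (u i r : ℤ)) =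
        ∑ i, a i * (u i r : ℤ) := by
      intro r
      rw [← Finset.sum_sub_distrib]
      refine Finset.sum_congr rfl fun i _ => ?_
      rw [← han i]; ring
    have keyZ : ∀ r : Fin (k + 1), ∑ i, a i * (u i r : ℤ) =
        (N : ℤ) * (if r = Fin.last k then (1 : ℤ) else 0) := by
      intro r
      have h := keyQ r
      split_ifs with hr
      · rw [if_pos hr] at h
        simp only [mul_one] at h ⊢
        exact_mod_cast h
      · rw [if_neg hr] at h
        simp only [mul_zero] at h ⊢
        exact_mod_cast h
    -- the two witnesses
    set v : Fin (k + 1) → ℕ := b + ∑ i, n i • u i with hv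
    set w : Fin (k + 1) → ℕ := b + ∑ i, m i • u i with hw
    have hvL : v ∈ L := by rw [hL]; exact ⟨n, rfl⟩
    have hwL : w ∈ L := by rw [hL]; exact ⟨m, rfl⟩
    have happ : ∀ (g : Fin p → ℕ) (r : Fin (k + 1)),
        (b + ∑ i, g i • u i) r = b r + ∑ i, g i * u i r := by
      intro g r
      simp [Finset.sum_apply]
    have hvw : v = w := by
      refine hfun v hvL w hwL fun i => ?_
      rw [hv, hw, happ, happ]
      have hz : ∑ j, a j * (u j i.castSucc : ℤ) = 0 := by
        rw [keyZ, if_neg (Fin.castSucc_lt_last i).ne, mul_zero]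
      have := hsub i.castSucc
      rw [hz, sub_eq_zero] at this
      have : ∑ j, n j * u j i.castSucc = ∑ j, m j * u j i.castSucc := by
        exact_mod_cast this
      rw [this]
    have hlast := congrFun hvw (Fin.last k)
    rw [hv, hw, happ, happ] at hlast
    have hNeq : (∑ i, (n i : ℤ) * (u i (Fin.last k) : ℤ)) -
        (∑ i, (m i : ℤ) * (u i (Fin.last k) : ℤ)) = (N : ℤ) := by
      rw [hsub, keyZ, if_pos rfl, mul_one]
    have h1 : ∑ i, n i * u i (Fin.last k) = ∑ i, m i * u i (Fin.last k) := by omega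
    have h2 : (∑ i, (n i : ℤ) * (u i (Fin.last k) : ℤ)) =
        ∑ i, (m i : ℤ) * (u i (Fin.last k) : ℤ) := by exact_mod_cast h1
    rw [h2] at hNeq
    simp at hNeq
    omega
  · -- no rational solution: separate with a rational dual functional
    have hjq : (fun i : Fin (k + 1) => if i = Fin.last k then (1 : ℚ) else 0) ∉
        Submodule.span ℚ (Set.range fun i : Fin p => fun j => ((u i j : ℚ))) := by
      intro hmem
      rw [Submodule.mem_span_range_iff_exists_fun] at hmem
      exact hQ hmem
    obtain ⟨f, hf0, hfmap⟩ := Submodule.exists_dual_map_eq_bot_of_notMem hjq inferInstance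
    have hfu : ∀ i, f (fun j => ((u i j : ℚ))) = 0 := by
      intro i
      have : f (fun j => ((u i j : ℚ))) ∈
          Submodule.map f (Submodule.span ℚ (Set.range fun i : Fin p => fun j => ((u i j : ℚ)))) :=
        Submodule.mem_map_of_mem (Submodule.subset_span ⟨i, rfl⟩)
      rw [hfmap] at this
      simpa using this
    set g : Fin (k + 1) → ℚ := fun r => f (fun j => if r = j then (1 : ℚ) else 0) with hg
    have hfx : ∀ x : Fin (k + 1) → ℚ, f x = ∑ r, x r * g r := by
      intro x
      conv_lhs => rw [pi_eq_sum_univ x]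
      rw [map_sum]
      refine Finset.sum_congr rfl fun r _ => ?_
      rw [map_smul, smul_eq_mul, hg]
    set F : (Fin (k + 1) → ℝ) →ₗ[ℝ] ℝ :=
      ∑ r, ((g r : ℚ) : ℝ) • LinearMap.proj r with hF
    have hFapp : ∀ x : Fin (k + 1) → ℝ, F x = ∑ r, ((g r : ℚ) : ℝ) * x r := by
      intro x
      simp [hF, smul_eq_mul]
    have hFu : ∀ i, F (fun j => ((u i j : ℕ) : ℝ)) = 0 := by
      intro i
      rw [hFapp]
      have h0 : ∑ r, (u i r : ℚ) * g r = 0 := by rw [← hfx]; exact hfu i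
      calc ∑ r, ((g r : ℚ) : ℝ) * ((u i r : ℕ) : ℝ)
          = ((∑ r, (u i r : ℚ) * g r : ℚ) : ℝ) := by push_cast; exact Finset.sum_congr rfl fun r _ => by ring
        _ = 0 := by rw [h0]; simp
    have h1 : F (fun i : Fin (k + 1) => if i = Fin.last k then (1 : ℝ) else 0) = 0 := by
      rw [← hc, map_sum]
      simp only [map_smul, hFu, smul_zero]
      simp
    have h2 : F (fun i : Fin (k + 1) => if i = Fin.last k then (1 : ℝ) else 0) =
        ((g (Fin.last k) : ℚ) : ℝ) := by
      rw [hFapp]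
      rw [Finset.sum_eq_single (Fin.last k)]
      · simp
      · intro r _ hr; simp [hr]
      · simp
    have h3 : g (Fin.last k) ≠ 0 := by
      have : (fun i : Fin (k + 1) => if i = Fin.last k then (1 : ℚ) else 0) =
          (fun j => if Fin.last k = j then (1 : ℚ) else 0) := by
        funext i; simp [eq_comm]
      rw [this] at hf0
      exact hf0
    rw [h2] at h1
    exact h3 (by exact_mod_cast h1)
end

section
/- Let f : ℕ^k → ℕ^l be a function whose graph is a finite union of linear sets L₁, …, L_n. Then there exists a finite set of partial functions f₁, …, f_n : ℕ^k ⇀ ℕ^l such that each graph of f_i equals L_i, each dom(f_i) is a linear subset of ℕ^k, f(x) = f_i(x) whenever x ∈ dom(f_i), and the union of the domains dom(f₁) ∪ ⋯ ∪ dom(f_n) = ℕ^k. -/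
theorem semilinear_graph_piecewise {k l n : ℕ} (f : (Fin k → ℕ) → (Fin l → ℕ))
    (L : Fin n → Set ((Fin k → ℕ) × (Fin l → ℕ)))
    (hlin : ∀ i, IsLinear (L i))
    (hgraph : {q : (Fin k → ℕ) × (Fin l → ℕ) | q.2 = f q.1} = ⋃ i, L i) :
    ∃ (D : Fin n → Set (Fin k → ℕ)) (g : Fin n → (Fin k → ℕ) → (Fin l → ℕ)),
      (∀ i, IsLinear (D i)) ∧
      (∀ i, {q : (Fin k → ℕ) × (Fin l → ℕ) | q.1 ∈ D i ∧ q.2 = g i q.1} = L i) ∧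
      (∀ i, ∀ x ∈ D i, f x = g i x) ∧
      (⋃ i, D i) = Set.univ := by
  have hsub : ∀ i, L i ⊆ {q : (Fin k → ℕ) × (Fin l → ℕ) | q.2 = f q.1} := by
    intro i
    rw [hgraph]
    exact Set.subset_iUnion L i
  refine ⟨fun i => Prod.fst '' L i, fun _ => f, ?_, ?_, ?_, ?_⟩
  · intro i
    obtain ⟨b, p, u, hu⟩ := hlin i
    refine ⟨b.1, p, fun j => (u j).1, ?_⟩
    ext x
    constructor
    · rintro ⟨q, hq, rfl⟩
      rw [hu] at hq
      obtain ⟨m, rfl⟩ := hq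
      exact ⟨m, by simp [Prod.fst_sum]⟩
    · rintro ⟨m, rfl⟩
      refine ⟨b + ∑ j, m j • u j, ?_, by simp [Prod.fst_sum]⟩
      rw [hu]; exact ⟨m, rfl⟩
  · intro i
    ext q
    simp only [Set.mem_setOf_eq]
    constructor
    · rintro ⟨⟨q', hq', hfst⟩, hsnd⟩
      have := hsub i hq'
      simp only [Set.mem_setOf_eq] at this
      have : q' = q := Prod.ext hfst (by rw [this, hfst, ← hsnd])
      rwa [← this]
    · intro hq
      exact ⟨⟨q, hq, rfl⟩, hsub i hq⟩
  · intro i x _; rfl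
  · ext x
    simp only [Set.mem_iUnion, Set.mem_univ, iff_true]
    have : (x, f x) ∈ ⋃ i, L i := by rw [← hgraph]; rfl
    obtain ⟨i, hi⟩ := Set.mem_iUnion.mp this
    exact ⟨i, (x, f x), hi, rfl⟩
end

section
/- Let F ⊆ ℕ^k × ℕ^l be a semilinear set that is the graph of a (total) function f : ℕ^k → ℕ^l. Then there exist finitely many partial affine functions f₁, …, f_m, each with linear domain, whose domains cover ℕ^k, such that f(x) = f_i(x) whenever x ∈ dom(f_i). -/
/-- `g` restricted to domain `D` is a partial affine function: there are a rational
matrix `A` and nonnegative integer offsets `b`, `c` with `g x = A (x - c) + b` and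
`x ≥ c` componentwise on the domain. -/
def IsPartialAffine {k l : ℕ} (D : Set (Fin k → ℕ))
    (g : (Fin k → ℕ) → (Fin l → ℕ)) : Prop :=
  ∃ (A : Fin l → Fin k → ℚ) (b : Fin l → ℕ) (c : Fin k → ℕ),
    ∀ x ∈ D, (∀ i, c i ≤ x i) ∧
      ∀ j, (g x j : ℚ) = (b j : ℚ) + ∑ i, A j i * ((x i : ℚ) - (c i : ℚ))

lemma fst_comp {α β : Type*} [AddCommMonoid α] [AddCommMonoid β] {p : ℕ}
    (b : α × β) (u : Fin p → α × β) (n : Fin p → ℕ) :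
    (b + ∑ j, n j • u j).1 = b.1 + ∑ j, n j • (u j).1 := by
  show (AddMonoidHom.fst α β) (b + ∑ j, n j • u j) = _
  rw [map_add, map_sum]; simp [map_nsmul]

lemma snd_comp {α β : Type*} [AddCommMonoid α] [AddCommMonoid β] {p : ℕ}
    (b : α × β) (u : Fin p → α × β) (n : Fin p → ℕ) :
    (b + ∑ j, n j • u j).2 = b.2 + ∑ j, n j • (u j).2 := by
  show (AddMonoidHom.snd α β) (b + ∑ j, n j • u j) = _
  rw [map_add, map_sum]; simp [map_nsmul]

lemma exists_matrix {k l p : ℕ} (v : Fin p → Fin k → ℚ) (w : Fin p → Fin l → ℚ)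
    (h : ∀ q : Fin p → ℚ, ∑ j, q j • v j = 0 → ∑ j, q j • w j = 0) :
    ∃ A : Fin l → Fin k → ℚ, ∀ n : Fin p → ℚ, ∀ jj,
      (∑ j, n j • w j) jj = ∑ i, A jj i * (∑ j, n j • v j) i := by
  let T : (Fin p → ℚ) →ₗ[ℚ] (Fin k → ℚ) :=
    { toFun := fun q => ∑ j, q j • v j
      map_add' := by intro a b; simp [add_smul, Finset.sum_add_distrib]
      map_smul' := by intro c a; simp [Finset.smul_sum, smul_smul] }
  let S : (Fin p → ℚ) →ₗ[ℚ] (Fin l → ℚ) :=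
    { toFun := fun q => ∑ j, q j • w j
      map_add' := by intro a b; simp [add_smul, Finset.sum_add_distrib]
      map_smul' := by intro c a; simp [Finset.smul_sum, smul_smul] }
  have hker : LinearMap.ker T ≤ LinearMap.ker S := fun q hq => h q hq
  let S' := (LinearMap.ker T).liftQ S hker
  let e := T.quotKerEquivRange
  let esymm : LinearMap.range T →ₗ[ℚ] ((Fin p → ℚ) ⧸ LinearMap.ker T) := e.symm.toLinearMap
  obtain ⟨A0, hA0⟩ := (S' ∘ₗ esymm).exists_extend
  have key : ∀ q, A0 (T q) = S q := by
    intro q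
    have : A0 (T q) = (A0 ∘ₗ (LinearMap.range T).subtype)
        ⟨T q, LinearMap.mem_range_self T q⟩ := rfl
    rw [this, hA0]
    show S' (e.symm (e (Submodule.Quotient.mk q))) = S q
    rw [LinearEquiv.symm_apply_apply]
    exact Submodule.liftQ_apply _ S q
  refine ⟨fun jj i => A0 (Pi.single i 1) jj, ?_⟩
  intro n jj
  have hx : ∀ x : Fin k → ℚ, A0 x jj = ∑ i, A0 (Pi.single i 1) jj * x i := by
    intro x
    have : x = ∑ i, x i • (Pi.single i (1:ℚ) : Fin k → ℚ) := by
      rw [← Finset.univ_sum_single x]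
      congr 1; funext i
      rw [← Pi.single_smul]; simp
    conv_lhs => rw [this]
    rw [map_sum]
    simp [Finset.sum_apply, mul_comm]
  calc (∑ j, n j • w j) jj = A0 (T n) jj := by rw [key n]; rfl
    _ = ∑ i, A0 (Pi.single i 1) jj * (∑ j, n j • v j) i := by rw [hx]; rfl

lemma affine_piece {k l : ℕ} (f : (Fin k → ℕ) → (Fin l → ℕ))
    (b : (Fin k → ℕ) × (Fin l → ℕ)) {p : ℕ} (u : Fin p → (Fin k → ℕ) × (Fin l → ℕ))
    (hsub : ∀ n : Fin p → ℕ, (b + ∑ j, n j • u j).2 = f (b + ∑ j, n j • u j).1) :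
    IsPartialAffine {x | ∃ n : Fin p → ℕ, x = b.1 + ∑ j, n j • (u j).1} f := by
  classical
  set v : Fin p → Fin k → ℚ := fun j i => ((u j).1 i : ℚ) with hv
  set w : Fin p → Fin l → ℚ := fun j i => ((u j).2 i : ℚ) with hw
  have hker : ∀ q : Fin p → ℚ, ∑ j, q j • v j = 0 → ∑ j, q j • w j = 0 := by
    intro q hq
    set d : ℕ := ∏ j, (q j).den with hd
    have hdpos : 0 < d := Finset.prod_pos (fun j _ => (q j).pos)
    have hzq : ∀ j, ∃ z : ℤ, (z : ℚ) = q j * d := by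
      intro j
      obtain ⟨e, he⟩ := Finset.dvd_prod_of_mem (fun j => (q j).den) (Finset.mem_univ j)
      refine ⟨(q j).num * e, ?_⟩
      have hcast : (d:ℚ) = ((q j).den : ℚ) * (e : ℚ) := by
        rw [hd]; exact_mod_cast congrArg (Nat.cast : ℕ → ℚ) he
      rw [hcast, ← mul_assoc, Rat.mul_den_eq_num]
      push_cast; ring
    choose z hz using hzq
    set n : Fin p → ℕ := fun j => (z j).toNat with hn
    set m : Fin p → ℕ := fun j => (-(z j)).toNat with hm
    have hnm : ∀ j, (n j : ℚ) - m j = z j := by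
      intro j
      have := Int.toNat_sub_toNat_neg (z j)
      exact_mod_cast this
    -- rational relations applied at points
    have hqv : ∀ i, ∑ j, q j * v j i = 0 := by
      intro i
      have h0 : (∑ j, q j • v j) i = 0 := by rw [hq]; rfl
      simpa [Finset.sum_apply] using h0
    have hrel1 : (b.1 + ∑ j, n j • (u j).1) = (b.1 + ∑ j, m j • (u j).1) := by
      funext i
      have key : ∑ j, (n j : ℚ) * v j i = ∑ j, (m j : ℚ) * v j i := by
        rw [← sub_eq_zero, ← Finset.sum_sub_distrib]
        have : ∀ j ∈ Finset.univ, (n j:ℚ) * v j i - (m j:ℚ) * v j i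
            = (d:ℚ) * (q j * v j i) := by
          intro j _
          rw [← sub_mul, hnm j, hz j]; ring
        rw [Finset.sum_congr rfl this, ← Finset.mul_sum, hqv i, mul_zero]
      have : ((b.1 i + ∑ j, n j * (u j).1 i : ℕ) : ℚ)
          = ((b.1 i + ∑ j, m j * (u j).1 i : ℕ) : ℚ) := by
        push_cast
        rw [hv] at key
        simp only [] at key
        rw [key]
      have hnat : b.1 i + ∑ j, n j * (u j).1 i = b.1 i + ∑ j, m j * (u j).1 i := by
        exact_mod_cast this
      simpa [Finset.sum_apply, smul_eq_mul] using hnat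
    have e1 := hsub n
    have e2 := hsub m
    rw [fst_comp, snd_comp] at e1 e2
    rw [← hrel1] at e2
    have hrel2 : ∑ j, n j • (u j).2 = ∑ j, m j • (u j).2 :=
      add_left_cancel (e1.trans e2.symm)
    funext jj
    have key : ∑ j, (n j : ℚ) * w j jj = ∑ j, (m j : ℚ) * w j jj := by
      have := congrFun hrel2 jj
      simp only [Finset.sum_apply, Pi.smul_apply, smul_eq_mul] at this
      simp only [hw]
      exact_mod_cast this
    have hzero : ∑ j, q j * w j jj = 0 := by
      have h1 : (d:ℚ) * ∑ j, q j * w j jj = 0 := by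
        rw [Finset.mul_sum]
        have : ∀ j ∈ Finset.univ, (d:ℚ) * (q j * w j jj)
            = (n j:ℚ) * w j jj - (m j:ℚ) * w j jj := by
          intro j _
          rw [← sub_mul, hnm j, hz j]; ring
        rw [Finset.sum_congr rfl this, Finset.sum_sub_distrib, key, sub_self]
      have hd0 : (d:ℚ) ≠ 0 := by positivity
      exact (mul_eq_zero.1 h1).resolve_left hd0
    simpa [Finset.sum_apply] using hzero
  obtain ⟨A, hA⟩ := exists_matrix v w hker
  refine ⟨A, b.2, b.1, ?_⟩
  rintro x ⟨n, rfl⟩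
  constructor
  · intro i
    simp only [Pi.add_apply]
    exact Nat.le_add_right _ _
  · intro j
    have e1 := hsub n
    rw [fst_comp, snd_comp] at e1
    rw [← e1]
    have hAn := hA (fun j' => (n j' : ℚ)) j
    simp only [Finset.sum_apply, Pi.smul_apply, smul_eq_mul] at hAn
    have lhs : (((b.2 + ∑ j', n j' • (u j').2) j : ℕ) : ℚ)
        = (b.2 j : ℚ) + ∑ j', (n j' : ℚ) * w j' j := by
      simp only [Pi.add_apply, Finset.sum_apply, Pi.smul_apply, smul_eq_mul, hw]
      push_cast; ring
    rw [lhs, hAn]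
    congr 1
    apply Finset.sum_congr rfl
    intro i _
    congr 1
    simp only [Pi.add_apply, Finset.sum_apply, Pi.smul_apply, smul_eq_mul, hv]
    push_cast; ring

theorem semilinear_function_piecewise_affine {k l : ℕ}
    (f : (Fin k → ℕ) → (Fin l → ℕ)) (F : Set ((Fin k → ℕ) × (Fin l → ℕ)))
    (hF : IsSemilinear F)
    (hgraph : F = {q : (Fin k → ℕ) × (Fin l → ℕ) | q.2 = f q.1}) :
    ∃ (m : ℕ) (D : Fin m → Set (Fin k → ℕ)) (g : Fin m → (Fin k → ℕ) → (Fin l → ℕ)),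
      (∀ i, IsLinear (D i)) ∧
      (∀ i, IsPartialAffine (D i) (g i)) ∧
      (⋃ i, D i) = Set.univ ∧
      (∀ i, ∀ x ∈ D i, f x = g i x) := by
  classical
  obtain ⟨t, L, hlin, hFU⟩ := hF
  choose b p u hu using hlin
  have hmemF : ∀ (i : Fin t) (n : Fin (p i) → ℕ),
      (b i + ∑ j, n j • u i j).2 = f (b i + ∑ j, n j • u i j).1 := by
    intro i n
    have hmem : b i + ∑ j, n j • u i j ∈ L i := by rw [hu i]; exact ⟨n, rfl⟩
    have : b i + ∑ j, n j • u i j ∈ F := by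
      rw [hFU]; exact Set.mem_iUnion.2 ⟨i, hmem⟩
    rw [hgraph] at this; exact this
  refine ⟨t, fun i => {x | ∃ n : Fin (p i) → ℕ, x = (b i).1 + ∑ j, n j • (u i j).1},
    fun _ => f, ?_, ?_, ?_, ?_⟩
  · intro i; exact ⟨(b i).1, p i, fun j => (u i j).1, rfl⟩
  · intro i; exact affine_piece f (b i) (u i) (hmemF i)
  · apply Set.eq_univ_of_forall
    intro x
    have hx : (x, f x) ∈ F := by rw [hgraph]; exact rfl
    rw [hFU] at hx
    obtain ⟨i, hi⟩ := Set.mem_iUnion.1 hx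
    rw [hu i] at hi
    obtain ⟨n, hn⟩ := hi
    refine Set.mem_iUnion.2 ⟨i, n, ?_⟩
    have := congrArg Prod.fst hn
    rwa [fst_comp] at this
  · intro i x _; rfl
end

section
/- Let L = {b + n₁u₁ + ⋯ + n_p u_p | n_i ∈ ℕ} ⊆ ℕ^(k+1) with b, u_i ∈ ℕ^(k+1), and suppose there exist c ∈ ℤ, c ≠ 0, and m₁, …, m_p ∈ ℤ with c·(0,…,0,1) = m₁u₁ + ⋯ + m_p u_p. Then L contains two distinct elements that agree on their first k coordinates; in particular L is not the graph of a partial function ℕ^k ⇀ ℕ. -/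
theorem not_graph_of_integer_combination {k p : ℕ}
    (b : Fin (k + 1) → ℕ) (u : Fin p → Fin (k + 1) → ℕ)
    (L : Set (Fin (k + 1) → ℕ))
    (hL : L = {v | ∃ n : Fin p → ℕ, v = b + ∑ i, n i • u i})
    (c : ℤ) (hc : c ≠ 0) (m : Fin p → ℤ)
    (h : (fun i : Fin (k + 1) => if i = Fin.last k then c else 0) =
      ∑ i, m i • (fun j => (u i j : ℤ))) :
    ∃ v ∈ L, ∃ w ∈ L, v ≠ w ∧ ∀ i : Fin k, v i.castSucc = w i.castSucc := by
  subst hL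
  set np : Fin p → ℕ := fun i => (m i).toNat with hnp
  set nm : Fin p → ℕ := fun i => (-(m i)).toNat with hnm
  have key : ∀ j : Fin (k + 1),
      ((b + ∑ i, np i • u i) j : ℤ) - ((b + ∑ i, nm i • u i) j : ℤ)
        = (if j = Fin.last k then c else 0) := by
    intro j
    have hj := congrFun h j
    simp only [Pi.add_apply, Finset.sum_apply, Pi.smul_apply, smul_eq_mul] at hj ⊢
    push_cast
    rw [hj, add_sub_add_left_eq_sub, ← Finset.sum_sub_distrib]
    apply Finset.sum_congr rfl
    intro i _
    have : ((np i : ℤ)) - (nm i : ℤ) = m i := by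
      simp only [hnp, hnm]
      omega
    rw [← this]
    ring
  refine ⟨b + ∑ i, np i • u i, ⟨np, rfl⟩, b + ∑ i, nm i • u i, ⟨nm, rfl⟩, ?_, ?_⟩
  · intro heq
    have := key (Fin.last k)
    rw [heq] at this
    simp at this
    exact hc this.symm
  · intro i
    have := key i.castSucc
    rw [if_neg (Fin.castSucc_lt_last i).ne] at this
    have : ((b + ∑ i, np i • u i) i.castSucc : ℤ) = ((b + ∑ i, nm i • u i) i.castSucc : ℤ) := by
      omega
    exact_mod_cast this
end
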